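/- Let N ≥ 3 and ℓ ∈ ℝ^N with |ℓ| < 1. Then the energy of the traveling wave W_ℓ satisfies E(W_ℓ(0), ∂_t W_ℓ(0)) = E(W,0)/√(1-|ℓ|²), and its momentum satisfies P(W_ℓ(0), ∂_t W_ℓ(0)) = -(ℓ/√(1-|ℓ|²)) E(W,0). -/

import Mathlib

open MeasureTheory
open scoped RealInnerProductSpace

/-- The ground state `W(x) = (1 + |x|²/(N(N-2)))^{1-N/2}` on `ℝ^N`. -/
noncomputable def groundStateW (N : ℕ) (x : EuclideanSpace ℝ (Fin N)) : ℝ :=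
  (1 + ‖x‖ ^ 2 / (N * (N - 2))) ^ ((1 : ℝ) - N / 2)

/-- The traveling wave `W_ℓ`, i.e. the Lorentz transform with velocity `ℓ` of the
stationary solution `W`. -/
noncomputable def travelingW (N : ℕ) (ℓ : EuclideanSpace ℝ (Fin N)) (t : ℝ)
    (x : EuclideanSpace ℝ (Fin N)) : ℝ :=
  groundStateW N
    (((-t / Real.sqrt (1 - ‖ℓ‖ ^ 2)
        + 1 / ‖ℓ‖ ^ 2 * (1 / Real.sqrt (1 - ‖ℓ‖ ^ 2) - 1) * ⟪ℓ, x⟫) • ℓ) + x)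

/-- The conserved energy of the energy-critical wave equation. -/
noncomputable def waveEnergy (N : ℕ) (u₀ u₁ : EuclideanSpace ℝ (Fin N) → ℝ) : ℝ :=
  (1 / 2) * (∫ x, (‖fderiv ℝ u₀ x‖ ^ 2 + u₁ x ^ 2))
    - ((N : ℝ) - 2) / (2 * N) * ∫ x, |u₀ x| ^ (2 * (N : ℝ) / ((N : ℝ) - 2))

/-- The conserved momentum of the energy-critical wave equation. -/
noncomputable def waveMomentum (N : ℕ) (u₀ u₁ : EuclideanSpace ℝ (Fin N) → ℝ) :
    EuclideanSpace ℝ (Fin N) :=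
  ∫ x, u₁ x • gradient u₀ x

open Real Set Filter Topology InnerProductSpace MeasureTheory Module

/-!
Let `γ = (1 - ‖ℓ‖²)^{-1/2}` and let `L x = x + (γ - 1) ⟪ℓ, x⟫ ℓ / ‖ℓ‖²` (so `L = 1` when `ℓ = 0`);
`L` is symmetric, `det L = γ` and `L ℓ = γ ℓ`, and `W_ℓ(t, x) = W (L x - t γ ℓ)`. Hence
`∇W_ℓ(0) = L (∇W ∘ L)` and `∂ₜW_ℓ(0) = -γ ⟪∇W ∘ L, ℓ⟫`. As `∇W(y)` is a radial multiple of `y`, the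
substitution `y = L x` turns energy and momentum into moments `∫ ⟪u, y⟫ ⟪v, y⟫ |W|^{2N/(N-2)}`,
which rotation invariance reduces to `⟪u, v⟫ / N · ∫ ‖y‖² |W|^{2N/(N-2)}`. Integrating the
derivative of `r^N (1 + r²/(N(N-2)))^{1-N}` in polar coordinates gives
`∫ ‖y‖² |W|^{2N/(N-2)} = N² ∫ |W|^{2N/(N-2)}`, that is `E(W, 0) = (1/N) ∫ |W|^{2N/(N-2)}`, and both
claims reduce to `1 + γ² ‖ℓ‖² = γ²`.
-/

section RankOne

variable {E : Type*} [NormedAddCommGroup E] [InnerProductSpace ℝ E] [FiniteDimensional ℝ E]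

theorem ContinuousLinearMap.det_one_add_rankOne (x y : E) :
    (1 + rankOne ℝ x y).det = 1 + ⟪y, x⟫ := by
  let b := stdOrthonormalBasis ℝ E
  have hmatrix : LinearMap.toMatrix b.toBasis b.toBasis (1 + rankOne ℝ x y : E →L[ℝ] E)
      = 1 + Matrix.replicateCol Unit (b.toBasis.repr x) * Matrix.replicateRow Unit (b.repr y) := by
    rw [ContinuousLinearMap.toLinearMap_add, map_add, ContinuousLinearMap.toLinearMap_one,
      LinearMap.toMatrix_one, toMatrix_rankOne, star_trivial, Matrix.vecMulVec_eq Unit]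
  rw [ContinuousLinearMap.det, ← LinearMap.det_toMatrix b.toBasis, hmatrix,
    Matrix.det_one_add_replicateCol_mul_replicateRow, ← b.sum_inner_mul_inner]
  simp [dotProduct, b.repr_apply_apply, real_inner_comm]

end RankOne

section LorentzFactor

variable {E : Type*} [SeminormedAddGroup E] {ℓ : E}

noncomputable def lorentzFactor (ℓ : E) : ℝ := (√(1 - ‖ℓ‖ ^ 2))⁻¹

theorem lorentzFactor_pos (hℓ : ‖ℓ‖ < 1) : 0 < lorentzFactor ℓ := by
  unfold lorentzFactor
  have : ‖ℓ‖ ^ 2 < 1 := by nlinarith [norm_nonneg ℓ]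
  positivity

theorem lorentzFactor_sq_mul_norm_sq (hℓ : ‖ℓ‖ < 1) :
    lorentzFactor ℓ ^ 2 * ‖ℓ‖ ^ 2 = lorentzFactor ℓ ^ 2 - 1 := by
  have : 0 < 1 - ‖ℓ‖ ^ 2 := by nlinarith [norm_nonneg ℓ]
  rw [lorentzFactor, inv_pow, sq_sqrt this.le]
  field_simp
  ring

end LorentzFactor

section LorentzBoost

variable {E : Type*} [NormedAddCommGroup E] [InnerProductSpace ℝ E] {ℓ : E}

noncomputable def lorentzBoost (ℓ : E) : E →L[ℝ] E :=
  1 + rankOne ℝ (((lorentzFactor ℓ - 1) / ‖ℓ‖ ^ 2) • ℓ) ℓ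

theorem lorentzBoost_apply (ℓ x : E) :
    lorentzBoost ℓ x = x + ((lorentzFactor ℓ - 1) / ‖ℓ‖ ^ 2 * ⟪ℓ, x⟫) • ℓ := by
  simp [lorentzBoost, smul_smul, mul_comm]

theorem lorentzBoost_isSymmetric (ℓ : E) : (lorentzBoost ℓ : E →ₗ[ℝ] E).IsSymmetric := by
  intro x y
  simp only [ContinuousLinearMap.coe_coe, lorentzBoost_apply, inner_add_left, inner_add_right,
    real_inner_smul_left, real_inner_smul_right, real_inner_comm x ℓ]
  ring

theorem lorentzBoost_self : lorentzBoost ℓ ℓ = lorentzFactor ℓ • ℓ := by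
  rcases eq_or_ne ℓ 0 with rfl | hℓ₀
  · simp
  · rw [lorentzBoost_apply, real_inner_self_eq_norm_sq, div_mul_cancel₀ _ (by positivity)]
    module

theorem norm_lorentzBoost_sq (hℓ : ‖ℓ‖ < 1) (x : E) :
    ‖lorentzBoost ℓ x‖ ^ 2 = ‖x‖ ^ 2 + lorentzFactor ℓ ^ 2 * ⟪ℓ, x⟫ ^ 2 := by
  rcases eq_or_ne ℓ 0 with rfl | hℓ₀
  · simp [lorentzBoost_apply]
  · have hc : ‖ℓ‖ ^ 2 ≠ 0 := by positivity
    rw [lorentzBoost_apply, norm_add_sq_real, norm_smul, real_inner_smul_right, mul_pow,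
      Real.norm_eq_abs, sq_abs, real_inner_comm ℓ x]
    field_simp
    linear_combination (-⟪ℓ, x⟫ ^ 2) * lorentzFactor_sq_mul_norm_sq hℓ

theorem det_lorentzBoost [FiniteDimensional ℝ E] :
    (lorentzBoost ℓ).det = lorentzFactor ℓ := by
  rw [lorentzBoost, ContinuousLinearMap.det_one_add_rankOne, real_inner_smul_right,
    real_inner_self_eq_norm_sq]
  rcases eq_or_ne ℓ 0 with rfl | hℓ₀
  · simp [lorentzFactor]
  · field_simp
    ring

end LorentzBoost

section ChangeOfVariables

variable {E F : Type*} [NormedAddCommGroup E] [NormedSpace ℝ E] [FiniteDimensional ℝ E]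
  [MeasurableSpace E] [BorelSpace E] [NormedAddCommGroup F] [NormedSpace ℝ F]
  (μ : Measure E) [μ.IsAddHaarMeasure]

theorem integral_comp_continuousLinearMap {A : E →L[ℝ] E} (hA : A.det ≠ 0) (g : E → F) :
    ∫ x, g (A x) ∂μ = |A.det|⁻¹ • ∫ y, g y ∂μ := by
  have hbij : Function.Bijective A :=
    (Module.End.isUnit_iff _).mp ((LinearMap.isUnit_iff_isUnit_det _).mpr hA.isUnit)
  have := integral_image_eq_integral_abs_det_fderiv_smul μ MeasurableSet.univ
    (fun x _ => A.hasFDerivAt.hasFDerivWithinAt) hbij.injective.injOn g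
  rw [image_univ, hbij.surjective.range_eq, setIntegral_univ, setIntegral_univ,
    integral_smul] at this
  rw [this, smul_smul, inv_mul_cancel₀ (abs_ne_zero.mpr hA), one_smul]

end ChangeOfVariables

section Gradient

variable {E : Type*} [NormedAddCommGroup E] [InnerProductSpace ℝ E] [CompleteSpace E]
  {f : E → ℝ} {g x : E}

theorem HasGradientAt.comp_isSymmetric {A : E →L[ℝ] E} (hA : (A : E →ₗ[ℝ] E).IsSymmetric)
    (hf : HasGradientAt f g (A x)) : HasGradientAt (f ∘ A) (A g) x := by
  rw [hasGradientAt_iff_hasFDerivAt] at hf ⊢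
  refine (hf.comp x A.hasFDerivAt).congr_fderiv (ContinuousLinearMap.ext fun v => ?_)
  simpa using (hA g v).symm

theorem HasGradientAt.hasDerivAt_add_smul (hf : HasGradientAt f g x) (v : E) :
    HasDerivAt (fun t : ℝ => f (x + t • v)) ⟪g, v⟫ 0 :=
  (by simpa using hf.hasFDerivAt.hasLineDerivAt v : HasLineDerivAt ℝ f ⟪g, v⟫ x v)

theorem HasGradientAt.norm_fderiv (hf : HasGradientAt f g x) : ‖fderiv ℝ f x‖ = ‖g‖ := by
  rw [hf.hasFDerivAt.fderiv, LinearIsometryEquiv.norm_map]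

end Gradient

section SecondMoments

variable {E : Type*} [NormedAddCommGroup E] [InnerProductSpace ℝ E] [FiniteDimensional ℝ E]
  [MeasurableSpace E] [BorelSpace E] {f : E → ℝ}

theorem integral_inner_sq_mul_eq_of_norm_eq (hf : ∀ (R : E ≃ₗᵢ[ℝ] E) x, f (R x) = f x)
    {u v : E} (huv : ‖u‖ = ‖v‖) :
    ∫ x, ⟪u, x⟫ ^ 2 * f x = ∫ x, ⟪v, x⟫ ^ 2 * f x := by
  let R := (ℝ ∙ (u - v))ᗮ.reflection
  have hRu : R u = v := Submodule.reflection_sub huv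
  rw [← integral_comp R (fun x => ⟪v, x⟫ ^ 2 * f x)]
  simp only [← hRu, R.inner_map_map, hf]

variable (hmeas : AEStronglyMeasurable f) (hint : Integrable fun x => ‖x‖ ^ 2 * f x)
include hmeas hint

theorem integrable_inner_sq_mul (u : E) : Integrable fun x => ⟪u, x⟫ ^ 2 * f x := by
  refine (hint.norm.const_mul (‖u‖ ^ 2)).mono' (by fun_prop) (.of_forall fun x => ?_)
  calc ‖⟪u, x⟫ ^ 2 * f x‖ ≤ (‖u‖ * ‖x‖) ^ 2 * ‖f x‖ := by
        rw [norm_mul, norm_pow]; gcongr; exact norm_inner_le_norm _ _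
    _ = ‖u‖ ^ 2 * ‖‖x‖ ^ 2 * f x‖ := by rw [norm_mul, norm_pow, norm_norm]; ring

theorem integrable_inner_mul_smul (u : E) :
    Integrable fun x => (⟪u, x⟫ * f x) • x := by
  refine (hint.norm.const_mul ‖u‖).mono' (by fun_prop) (.of_forall fun x => ?_)
  calc ‖(⟪u, x⟫ * f x) • x‖ ≤ (‖u‖ * ‖x‖) * ‖f x‖ * ‖x‖ := by
        rw [norm_smul, norm_mul]; gcongr; exact norm_inner_le_norm _ _
    _ = ‖u‖ * ‖‖x‖ ^ 2 * f x‖ := by rw [norm_mul, norm_pow, norm_norm]; ring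

theorem finrank_mul_integral_inner_sq_mul (hf : ∀ (R : E ≃ₗᵢ[ℝ] E) x, f (R x) = f x) (u : E) :
    finrank ℝ E * ∫ x, ⟪u, x⟫ ^ 2 * f x = ‖u‖ ^ 2 * ∫ x, ‖x‖ ^ 2 * f x := by
  let b := stdOrthonormalBasis ℝ E
  have hb (i) : ∫ x, ⟪u, x⟫ ^ 2 * f x = ‖u‖ ^ 2 * ∫ x, ⟪b i, x⟫ ^ 2 * f x := by
    rw [integral_inner_sq_mul_eq_of_norm_eq hf (v := ‖u‖ • b i)
      (by simp [norm_smul, b.norm_eq_one]), ← integral_const_mul]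
    simp only [real_inner_smul_left, mul_pow, mul_assoc]
  calc (finrank ℝ E : ℝ) * ∫ x, ⟪u, x⟫ ^ 2 * f x
      = ∑ i, ‖u‖ ^ 2 * ∫ x, ⟪b i, x⟫ ^ 2 * f x := by
        rw [← Finset.sum_congr rfl fun i _ => hb i]; simp
    _ = ‖u‖ ^ 2 * ∫ x, ∑ i, ⟪b i, x⟫ ^ 2 * f x := by
      rw [← Finset.mul_sum,
        integral_finsetSum _ fun i _ => integrable_inner_sq_mul hmeas hint (b i)]
    _ = ‖u‖ ^ 2 * ∫ x, ‖x‖ ^ 2 * f x := by simp_rw [← Finset.sum_mul, b.sum_sq_inner_right]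

theorem finrank_mul_integral_inner_mul_inner_mul (hf : ∀ (R : E ≃ₗᵢ[ℝ] E) x, f (R x) = f x)
    (u v : E) :
    finrank ℝ E * ∫ x, ⟪u, x⟫ * ⟪v, x⟫ * f x = ⟪u, v⟫ * ∫ x, ‖x‖ ^ 2 * f x := by
  have hpolar (x : E) : ⟪u, x⟫ * ⟪v, x⟫ * f x
      = (⟪u + v, x⟫ ^ 2 * f x - ⟪u - v, x⟫ ^ 2 * f x) / 4 := by
    simp only [inner_add_left, inner_sub_left]; ring
  have hsq := integrable_inner_sq_mul hmeas hint
  simp_rw [hpolar]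
  rw [integral_div, integral_sub (hsq _) (hsq _), mul_div_assoc', mul_sub,
    finrank_mul_integral_inner_sq_mul hmeas hint hf,
    finrank_mul_integral_inner_sq_mul hmeas hint hf, ← sub_mul, norm_add_sq_real, norm_sub_sq_real]
  ring

theorem finrank_smul_integral_inner_mul_smul (hf : ∀ (R : E ≃ₗᵢ[ℝ] E) x, f (R x) = f x)
    (u : E) :
    (finrank ℝ E : ℝ) • ∫ x, (⟪u, x⟫ * f x) • x = (∫ x, ‖x‖ ^ 2 * f x) • u := by
  refine ext_inner_left ℝ fun w => ?_
  rw [inner_smul_right, ← integral_inner (integrable_inner_mul_smul hmeas hint u),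
    real_inner_smul_right]
  simp_rw [real_inner_smul_right, mul_right_comm _ (f _)]
  rw [finrank_mul_integral_inner_mul_inner_mul hmeas hint hf, real_inner_comm, mul_comm]

end SecondMoments

section GroundState

variable {N : ℕ}

local notation "𝔼" => EuclideanSpace ℝ (Fin N)

noncomputable def groundStateBase (N : ℕ) (r : ℝ) : ℝ := 1 + r ^ 2 / (N * (N - 2))

theorem groundStateW_eq (x : 𝔼) :
    groundStateW N x = groundStateBase N ‖x‖ ^ (1 - N / 2 : ℝ) := rfl

variable (hN : 3 ≤ N)
include hN

theorem three_le_mul_sub_two : 3 ≤ (N : ℝ) * (N - 2) := by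
  have : (3 : ℝ) ≤ N := by exact_mod_cast hN
  nlinarith

theorem one_le_groundStateBase (r : ℝ) : 1 ≤ groundStateBase N r := by
  have := three_le_mul_sub_two hN
  unfold groundStateBase
  have : 0 ≤ r ^ 2 / (N * (N - 2)) := by positivity
  linarith

theorem groundStateBase_pos (r : ℝ) : 0 < groundStateBase N r :=
  one_pos.trans_le (one_le_groundStateBase hN r)

theorem hasGradientAt_groundStateW (x : 𝔼) :
    HasGradientAt (groundStateW N)
      ((-(N : ℝ)⁻¹ * groundStateBase N ‖x‖ ^ (-(N : ℝ) / 2)) • x) x := by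
  have hN' : (3 : ℝ) ≤ N := by exact_mod_cast hN
  have hbase : HasFDerivAt (fun y : 𝔼 => groundStateBase N ‖y‖)
      (((N : ℝ) * (N - 2))⁻¹ • 2 • innerSL ℝ x) x :=
    (HasFDerivAt.mul_const (hasStrictFDerivAt_norm_sq x).hasFDerivAt _).const_add 1
  rw [hasGradientAt_iff_hasFDerivAt]
  refine (hbase.rpow_const (Or.inl (groundStateBase_pos hN ‖x‖).ne')).congr_fderiv ?_
  ext v
  simp only [FunLike.coe_smul, Pi.smul_apply, innerSL_apply_apply, smul_eq_mul,
    toDual_apply_apply, real_inner_smul_left]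
  have : (N : ℝ) - 2 ≠ 0 := by linarith
  have : (N : ℝ) ≠ 0 := by linarith
  rw [show (1 - N / 2 : ℝ) - 1 = -(N : ℝ) / 2 by ring]
  field_simp
  ring

theorem abs_groundStateW_rpow (x : 𝔼) :
    |groundStateW N x| ^ (2 * (N : ℝ) / (N - 2)) = groundStateBase N ‖x‖ ^ (-(N : ℝ)) := by
  have hN' : (3 : ℝ) ≤ N := by exact_mod_cast hN
  have : (N : ℝ) - 2 ≠ 0 := by linarith
  rw [groundStateW_eq, abs_of_pos (rpow_pos_of_pos (groundStateBase_pos hN _) _),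
    ← rpow_mul (groundStateBase_pos hN _).le]
  congr 1
  field_simp
  ring

theorem continuous_groundStateBase_rpow (r : ℝ) :
    Continuous fun x : 𝔼 => groundStateBase N ‖x‖ ^ r := by
  refine Continuous.rpow_const ?_ fun x => Or.inl (groundStateBase_pos hN ‖x‖).ne'
  unfold groundStateBase
  fun_prop

theorem integrable_groundStateBase_rpow_neg {r : ℝ} (hr : (N : ℝ) < 2 * r) :
    Integrable fun x : 𝔼 => groundStateBase N ‖x‖ ^ (-r) := by
  set a : ℝ := N * (N - 2)
  have ha : 1 ≤ a := by linarith [three_le_mul_sub_two hN]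
  have hr₀ : 0 ≤ r := by linarith [(N.cast_nonneg : (0 : ℝ) ≤ N)]
  have hdecay : Integrable fun x : 𝔼 => (1 + ‖x‖ ^ 2) ^ (-(2 * r) / 2) :=
    integrable_rpow_neg_one_add_norm_sq (by simpa using hr)
  refine (hdecay.const_mul (a ^ r)).mono'
    (continuous_groundStateBase_rpow hN _).aestronglyMeasurable (.of_forall fun x => ?_)
  have hlower : (1 + ‖x‖ ^ 2) / a ≤ groundStateBase N ‖x‖ := by
    rw [groundStateBase, div_le_iff₀ (by positivity), add_mul, div_mul_cancel₀ _ (by positivity)]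
    nlinarith
  rw [Real.norm_of_nonneg (rpow_nonneg (groundStateBase_pos hN _).le _),
    show -(2 * r) / 2 = -r by ring]
  calc groundStateBase N ‖x‖ ^ (-r) ≤ ((1 + ‖x‖ ^ 2) / a) ^ (-r) :=
        rpow_le_rpow_of_nonpos (by positivity) hlower (by linarith)
    _ = a ^ r * (1 + ‖x‖ ^ 2) ^ (-r) := by
        rw [div_rpow (by positivity) (by positivity), rpow_neg (by positivity) r,
          rpow_neg (by positivity) r]
        field_simp

theorem integrable_norm_sq_mul_groundStateBase_rpow :
    Integrable fun x : 𝔼 => ‖x‖ ^ 2 * groundStateBase N ‖x‖ ^ (-(N : ℝ)) := by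
  have hN' : (3 : ℝ) ≤ N := by exact_mod_cast hN
  have ha := three_le_mul_sub_two hN
  refine ((integrable_groundStateBase_rpow_neg hN (r := N - 1) (by linarith)).const_mul
    ((N : ℝ) * (N - 2))).mono'
    ((continuous_norm.pow 2).mul (continuous_groundStateBase_rpow hN _)).aestronglyMeasurable
    (.of_forall fun x => ?_)
  have hq := groundStateBase_pos hN ‖x‖
  have hnorm : ‖x‖ ^ 2 ≤ N * (N - 2) * groundStateBase N ‖x‖ := by
    rw [groundStateBase, mul_add, mul_div_cancel₀ _ (by positivity)]
    linarith
  rw [Real.norm_of_nonneg (by positivity), show -((N : ℝ) - 1) = 1 + -N by ring,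
    rpow_add hq, rpow_one, ← mul_assoc]
  gcongr

theorem hasDerivAt_pow_div_groundStateBase_pow (r : ℝ) :
    HasDerivAt (fun r => r ^ N / groundStateBase N r ^ (N - 1))
      (N * (r ^ (N - 1) * (groundStateBase N r ^ N)⁻¹)
        - (N : ℝ)⁻¹ * (r ^ (N - 1) * (r ^ 2 * (groundStateBase N r ^ N)⁻¹))) r := by
  have ha := three_le_mul_sub_two hN
  have hq := groundStateBase_pos hN r
  have hbase : HasDerivAt (fun r => groundStateBase N r) (2 * r / (N * (N - 2))) r :=
    (((hasDerivAt_pow 2 r).div_const _).const_add 1).congr_deriv (by norm_num)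
  refine ((hasDerivAt_pow N r).div (hbase.pow (N - 1)) (pow_ne_zero _ hq.ne')).congr_deriv ?_
  have hbracket : (N : ℝ) * groundStateBase N r - (N - 1) * (2 * r / (N * (N - 2))) * r
      = N - (N : ℝ)⁻¹ * r ^ 2 := by
    have : (N : ℝ) - 2 ≠ 0 := by nlinarith
    have : (N : ℝ) ≠ 0 := by nlinarith
    unfold groundStateBase
    field_simp
    ring
  obtain ⟨M, rfl⟩ : ∃ M, N = M + 3 := ⟨N - 3, by omega⟩
  simp only [show M + 3 - 1 = M + 2 by omega, show M + 2 - 1 = M + 1 by omega] at hbracket ⊢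
  push_cast [Pi.pow_apply] at hbracket ⊢
  generalize groundStateBase (M + 3) r = q at hq hbracket ⊢
  have : (M : ℝ) + 3 - 2 ≠ 0 := by linarith [(M.cast_nonneg : (0 : ℝ) ≤ M)]
  calc _ = r ^ (M + 2) * ((M + 3) * q - (M + 3 - 1) * (2 * r / ((M + 3) * (M + 3 - 2))) * r)
        / q ^ (M + 3) := by field_simp; ring
    _ = _ := by rw [hbracket]; field_simp

theorem tendsto_pow_div_groundStateBase_pow :
    Tendsto (fun r => r ^ N / groundStateBase N r ^ (N - 1)) atTop (𝓝 0) := by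
  have ha := three_le_mul_sub_two hN
  set a : ℝ := N * (N - 2)
  have hlim : Tendsto (fun r : ℝ => a ^ (N - 1) / r ^ (N - 2)) atTop (𝓝 0) :=
    tendsto_const_nhds.div_atTop (tendsto_pow_atTop (by omega))
  have hpos : ∀ᶠ r in atTop, (0 : ℝ) < r := eventually_gt_atTop 0
  refine squeeze_zero' ?_ ?_ hlim <;> filter_upwards [hpos] with r hr
  · have := groundStateBase_pos hN r
    positivity
  · have hlower : r ^ 2 / a ≤ groundStateBase N r := le_add_of_nonneg_left zero_le_one
    calc r ^ N / groundStateBase N r ^ (N - 1) ≤ r ^ N / (r ^ 2 / a) ^ (N - 1) := by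
          gcongr
      _ = a ^ (N - 1) / r ^ (N - 2) := by
          have : a ≠ 0 := by positivity
          obtain ⟨M, rfl⟩ : ∃ M, N = M + 3 := ⟨N - 3, by omega⟩
          simp only [show M + 3 - 1 = M + 2 by omega, show M + 3 - 2 = M + 1 by omega]
          rw [div_pow]
          field_simp
          ring

theorem integral_norm_sq_mul_groundStateBase_rpow :
    ∫ x : 𝔼, ‖x‖ ^ 2 * groundStateBase N ‖x‖ ^ (-(N : ℝ))
      = N ^ 2 * ∫ x : 𝔼, groundStateBase N ‖x‖ ^ (-(N : ℝ)) := by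
  have hN' : (3 : ℝ) ≤ N := by exact_mod_cast hN
  have : Nontrivial 𝔼 :=
    Module.nontrivial_of_finrank_pos (R := ℝ) (by simp; omega)
  set f : ℝ → ℝ := fun r => (groundStateBase N r ^ N)⁻¹
  have hf (r : ℝ) : groundStateBase N r ^ (-(N : ℝ)) = f r := by
    rw [rpow_neg (groundStateBase_pos hN r).le, rpow_natCast]
  simp only [hf]
  have hint₁ : IntegrableOn (fun r => r ^ (N - 1) * f r) (Ioi 0) := by
    have := integrable_groundStateBase_rpow_neg hN (r := N) (by linarith [hN'])
    simp only [hf] at this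
    simpa using (integrable_fun_norm_addHaar volume (f := f)).mp this
  have hint₂ : IntegrableOn (fun r => r ^ (N - 1) * (r ^ 2 * f r)) (Ioi 0) := by
    have := integrable_norm_sq_mul_groundStateBase_rpow hN
    simp only [hf] at this
    simpa using (integrable_fun_norm_addHaar volume (f := fun r => r ^ 2 * f r)).mp this
  have hFTC := integral_Ioi_of_hasDerivAt_of_tendsto'
    (fun r _ => hasDerivAt_pow_div_groundStateBase_pow hN r)
    ((hint₁.const_mul _).sub (hint₂.const_mul _)) (tendsto_pow_div_groundStateBase_pow hN)
  rw [integral_sub (hint₁.const_mul _) (hint₂.const_mul _), integral_const_mul,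
    integral_const_mul, zero_pow (by omega), zero_div, sub_zero] at hFTC
  have h1D : ∫ r in Ioi 0, r ^ (N - 1) * (r ^ 2 * f r)
      = N ^ 2 * ∫ r in Ioi 0, r ^ (N - 1) * f r := by
    have : (N : ℝ) ≠ 0 := by positivity
    field_simp at hFTC
    simp only [mul_assoc] at hFTC
    linarith
  rw [integral_fun_norm_addHaar volume (fun r => r ^ 2 * f r), integral_fun_norm_addHaar volume f]
  simp only [smul_eq_mul, finrank_euclideanSpace_fin, h1D]
  ring

theorem sq_groundStateBase_rpow_neg_half (r : ℝ) :
    (groundStateBase N r ^ (-(N : ℝ) / 2)) ^ 2 = groundStateBase N r ^ (-(N : ℝ)) := by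
  rw [← rpow_mul_natCast (groundStateBase_pos hN r).le]
  norm_num

theorem waveEnergy_groundStateW :
    waveEnergy N (groundStateW N) 0 = (∫ x : 𝔼, groundStateBase N ‖x‖ ^ (-(N : ℝ))) / N := by
  have hkin (x : 𝔼) : ‖fderiv ℝ (groundStateW N) x‖ ^ 2 + (0 : 𝔼 → ℝ) x ^ 2
      = (N : ℝ)⁻¹ ^ 2 * (‖x‖ ^ 2 * groundStateBase N ‖x‖ ^ (-(N : ℝ))) := by
    rw [(hasGradientAt_groundStateW hN x).norm_fderiv, norm_smul, mul_pow, Real.norm_eq_abs,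
      sq_abs, mul_pow, neg_sq, sq_groundStateBase_rpow_neg_half hN, Pi.zero_apply,
      zero_pow two_ne_zero, add_zero]
    ring
  simp only [waveEnergy, hkin, abs_groundStateW_rpow hN, integral_const_mul,
    integral_norm_sq_mul_groundStateBase_rpow hN]
  field_simp
  ring

theorem integral_inner_sq_mul_groundStateBase_rpow (u : 𝔼) :
    ∫ x : 𝔼, ⟪u, x⟫ ^ 2 * groundStateBase N ‖x‖ ^ (-(N : ℝ))
      = N * ‖u‖ ^ 2 * ∫ x : 𝔼, groundStateBase N ‖x‖ ^ (-(N : ℝ)) := by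
  have hN' : (N : ℝ) ≠ 0 := by positivity
  have := finrank_mul_integral_inner_sq_mul
    (continuous_groundStateBase_rpow hN _).aestronglyMeasurable
    (integrable_norm_sq_mul_groundStateBase_rpow hN) (by simp) u
  rw [finrank_euclideanSpace_fin, integral_norm_sq_mul_groundStateBase_rpow hN] at this
  apply mul_left_cancel₀ hN'
  rw [this]
  ring

theorem integral_inner_mul_groundStateBase_rpow_smul (u : 𝔼) :
    ∫ x : 𝔼, (⟪u, x⟫ * groundStateBase N ‖x‖ ^ (-(N : ℝ))) • x
      = (N * ∫ x : 𝔼, groundStateBase N ‖x‖ ^ (-(N : ℝ))) • u := by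
  have hN' : (N : ℝ) ≠ 0 := by positivity
  have := finrank_smul_integral_inner_mul_smul
    (continuous_groundStateBase_rpow hN _).aestronglyMeasurable
    (integrable_norm_sq_mul_groundStateBase_rpow hN) (by simp) u
  rw [finrank_euclideanSpace_fin, integral_norm_sq_mul_groundStateBase_rpow hN] at this
  apply smul_right_injective _ hN'
  simp only [this, smul_smul]
  ring_nf

end GroundState

section TravelingWave

variable {N : ℕ} {ℓ : EuclideanSpace ℝ (Fin N)}

local notation "𝔼" => EuclideanSpace ℝ (Fin N)

theorem travelingW_eq (t : ℝ) (x : 𝔼) :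
    travelingW N ℓ t x = groundStateW N (lorentzBoost ℓ x + t • (-lorentzFactor ℓ • ℓ)) := by
  rw [travelingW, lorentzBoost_apply, lorentzFactor]
  congr 1
  module

theorem travelingW_zero : travelingW N ℓ 0 = groundStateW N ∘ lorentzBoost ℓ := by
  ext x
  simp [travelingW_eq]

variable (hN : 3 ≤ N)
include hN

theorem hasGradientAt_groundStateW_comp_lorentzBoost (x : 𝔼) :
    HasGradientAt (groundStateW N ∘ lorentzBoost ℓ)
      ((-(N : ℝ)⁻¹ * groundStateBase N ‖lorentzBoost ℓ x‖ ^ (-(N : ℝ) / 2))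
        • lorentzBoost ℓ (lorentzBoost ℓ x)) x := by
  simpa using (hasGradientAt_groundStateW hN (lorentzBoost ℓ x)).comp_isSymmetric
    (lorentzBoost_isSymmetric ℓ)

theorem deriv_travelingW_zero (x : 𝔼) :
    deriv (fun t => travelingW N ℓ t x) 0 = lorentzFactor ℓ * (N : ℝ)⁻¹
      * groundStateBase N ‖lorentzBoost ℓ x‖ ^ (-(N : ℝ) / 2) * ⟪ℓ, lorentzBoost ℓ x⟫ := by
  simp only [travelingW_eq]
  rw [((hasGradientAt_groundStateW hN (lorentzBoost ℓ x)).hasDerivAt_add_smul _).deriv,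
    real_inner_smul_left, real_inner_smul_right, real_inner_comm]
  ring

theorem waveEnergy_travelingW (hℓ : ‖ℓ‖ < 1) :
    waveEnergy N (travelingW N ℓ 0) (fun x => deriv (fun t => travelingW N ℓ t x) 0)
      = lorentzFactor ℓ * waveEnergy N (groundStateW N) 0 := by
  have hγ := lorentzFactor_pos hℓ
  have hdet : (lorentzBoost ℓ).det ≠ 0 := by rw [det_lorentzBoost]; exact hγ.ne'
  set F : 𝔼 → ℝ := fun y => (N : ℝ)⁻¹ ^ 2 * (‖y‖ ^ 2 * groundStateBase N ‖y‖ ^ (-(N : ℝ))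
    + 2 * lorentzFactor ℓ ^ 2 * (⟪ℓ, y⟫ ^ 2 * groundStateBase N ‖y‖ ^ (-(N : ℝ)))) with hF
  have hkin (x : 𝔼) : ‖fderiv ℝ (travelingW N ℓ 0) x‖ ^ 2
      + deriv (fun t => travelingW N ℓ t x) 0 ^ 2 = F (lorentzBoost ℓ x) := by
    rw [travelingW_zero, (hasGradientAt_groundStateW_comp_lorentzBoost hN x).norm_fderiv,
      deriv_travelingW_zero hN, norm_smul]
    simp only [mul_pow, neg_sq, Real.norm_eq_abs, sq_abs, sq_groundStateBase_rpow_neg_half hN,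
      norm_lorentzBoost_sq hℓ, hF]
    ring
  have hpot (x : 𝔼) : |travelingW N ℓ 0 x| ^ (2 * (N : ℝ) / (N - 2))
      = groundStateBase N ‖lorentzBoost ℓ x‖ ^ (-(N : ℝ)) := by
    rw [travelingW_zero, Function.comp_apply, abs_groundStateW_rpow hN]
  have hmeas := (continuous_groundStateBase_rpow hN (-(N : ℝ))).aestronglyMeasurable (μ := volume)
  have hint := integrable_norm_sq_mul_groundStateBase_rpow hN
  rw [waveEnergy_groundStateW hN]
  simp only [waveEnergy, hkin, hpot]
  rw [integral_comp_continuousLinearMap volume hdet F,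
    integral_comp_continuousLinearMap volume hdet fun y => groundStateBase N ‖y‖ ^ (-(N : ℝ)),
    det_lorentzBoost, hF, integral_const_mul, integral_add hint
    ((integrable_inner_sq_mul hmeas hint ℓ).const_mul _), integral_const_mul,
    integral_norm_sq_mul_groundStateBase_rpow hN, integral_inner_sq_mul_groundStateBase_rpow hN,
    abs_of_pos hγ, smul_eq_mul, smul_eq_mul]
  field_simp
  linear_combination
    (2 * ∫ x : 𝔼, groundStateBase N ‖x‖ ^ (-(N : ℝ))) * lorentzFactor_sq_mul_norm_sq hℓ

theorem waveMomentum_travelingW (hℓ : ‖ℓ‖ < 1) :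
    waveMomentum N (travelingW N ℓ 0) (fun x => deriv (fun t => travelingW N ℓ t x) 0)
      = -(lorentzFactor ℓ * waveEnergy N (groundStateW N) 0) • ℓ := by
  have hγ := lorentzFactor_pos hℓ
  have hdet : (lorentzBoost ℓ).det ≠ 0 := by rw [det_lorentzBoost]; exact hγ.ne'
  set F : 𝔼 → 𝔼 := fun y => (-lorentzFactor ℓ * (N : ℝ)⁻¹ ^ 2)
    • lorentzBoost ℓ ((⟪ℓ, y⟫ * groundStateBase N ‖y‖ ^ (-(N : ℝ))) • y) with hF
  have hdensity (x : 𝔼) : deriv (fun t => travelingW N ℓ t x) 0 • gradient (travelingW N ℓ 0) x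
      = F (lorentzBoost ℓ x) := by
    rw [travelingW_zero, (hasGradientAt_groundStateW_comp_lorentzBoost hN x).gradient,
      deriv_travelingW_zero hN, hF]
    simp only [map_smul, smul_smul, ← sq_groundStateBase_rpow_neg_half hN]
    congr 1
    ring
  have hmeas := (continuous_groundStateBase_rpow hN (-(N : ℝ))).aestronglyMeasurable (μ := volume)
  have hint := integrable_norm_sq_mul_groundStateBase_rpow hN
  simp only [waveMomentum, hdensity]
  rw [integral_comp_continuousLinearMap volume hdet F, det_lorentzBoost, hF, integral_smul,
    ContinuousLinearMap.integral_comp_comm _ (integrable_inner_mul_smul hmeas hint ℓ),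
    integral_inner_mul_groundStateBase_rpow_smul hN, map_smul, lorentzBoost_self,
    waveEnergy_groundStateW hN, abs_of_pos hγ]
  simp only [smul_smul]
  congr 1
  field_simp

end TravelingWave

/-- Energy and momentum of the traveling wave:
`E(W_ℓ(0), ∂_t W_ℓ(0)) = E(W,0)/√(1-|ℓ|²)` and
`P(W_ℓ(0), ∂_t W_ℓ(0)) = -(ℓ/√(1-|ℓ|²)) E(W,0)`. -/
theorem travelingW_energy_momentum (N : ℕ) (hN : 3 ≤ N)
    (ℓ : EuclideanSpace ℝ (Fin N)) (hℓ : ‖ℓ‖ < 1) :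
    waveEnergy N (travelingW N ℓ 0) (fun x => deriv (fun t => travelingW N ℓ t x) 0)
        = waveEnergy N (groundStateW N) 0 / Real.sqrt (1 - ‖ℓ‖ ^ 2)
      ∧ waveMomentum N (travelingW N ℓ 0)
          (fun x => deriv (fun t => travelingW N ℓ t x) 0)
        = -(waveEnergy N (groundStateW N) 0 / Real.sqrt (1 - ‖ℓ‖ ^ 2)) • ℓ := by
  rw [show waveEnergy N (groundStateW N) 0 / Real.sqrt (1 - ‖ℓ‖ ^ 2)
      = lorentzFactor ℓ * waveEnergy N (groundStateW N) 0 by rw [lorentzFactor, div_eq_inv_mul]]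
  exact ⟨waveEnergy_travelingW hN hℓ, waveMomentum_travelingW hN hℓ⟩
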